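/- arXiv:1508.07938 — 3 statements merged into one kernel-verified Lean document; each statement's English description precedes it below -/
import Mathlib

section
/- Let g be a real Lie algebra with an invariant symmetric bilinear form ⟨·,·⟩ and a skew-symmetric derivation D of g. On the double extension ĝ = ℝ ⊕ g ⊕ ℝ with bracket [(z₁,x₁,t₁),(z₂,x₂,t₂)] = (⟨Dx₁,x₂⟩, [x₁,x₂] + t₁·Dx₂ - t₂·Dx₁, 0), the symmetric bilinear form κ((z₁,x₁,t₁),(z₂,x₂,t₂)) = ⟨x₁,x₂⟩ + z₁t₂ + z₂t₁ is invariant: κ([a,b],c) = κ(a,[b,c]) for all a,b,c ∈ ĝ. -/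
/-- On the double extension `ℝ ⊕ g ⊕ ℝ` of a real Lie algebra `g` with invariant
symmetric bilinear form `B` and skew-symmetric derivation `D`, the symmetric bilinear
form `κ((z₁,x₁,t₁),(z₂,x₂,t₂)) = B(x₁,x₂) + z₁t₂ + z₂t₁` is invariant. -/
theorem double_extension_form_invariant {g : Type*} [LieRing g] [LieAlgebra ℝ g]
    (B : g →ₗ[ℝ] g →ₗ[ℝ] ℝ)
    (hsymm : ∀ x y : g, B x y = B y x)
    (hinv : ∀ x y z : g, B ⁅x, y⁆ z = B x ⁅y, z⁆)
    (D : g →ₗ[ℝ] g)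
    (hder : ∀ x y : g, D ⁅x, y⁆ = ⁅D x, y⁆ + ⁅x, D y⁆)
    (hskew : ∀ x y : g, B (D x) y = -B x (D y))
    (br : (ℝ × g × ℝ) → (ℝ × g × ℝ) → (ℝ × g × ℝ))
    (hbr : ∀ a b : ℝ × g × ℝ, br a b =
      (B (D a.2.1) b.2.1, ⁅a.2.1, b.2.1⁆ + a.2.2 • D b.2.1 - b.2.2 • D a.2.1, (0 : ℝ)))
    (κ : (ℝ × g × ℝ) → (ℝ × g × ℝ) → ℝ)
    (hκ : ∀ a b : ℝ × g × ℝ, κ a b = B a.2.1 b.2.1 + a.1 * b.2.2 + b.1 * a.2.2) :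
    ∀ a b c : ℝ × g × ℝ, κ (br a b) c = κ a (br b c) := by
  intro a b c
  simp only [hbr, hκ, map_add, map_sub, map_smul, LinearMap.add_apply,
    LinearMap.sub_apply, LinearMap.smul_apply, smul_eq_mul, hinv, hskew]
  ring
end

section
/- Let g be a real Lie algebra with an invariant symmetric bilinear form ⟨·,·⟩ and D a skew-symmetric derivation. Then the bracket [(z₁,x₁,t₁),(z₂,x₂,t₂)] = (⟨Dx₁,x₂⟩, [x₁,x₂] + t₁·Dx₂ - t₂·Dx₁, 0) on ℝ × g × ℝ defines a Lie algebra structure (bilinear, alternating, and satisfying the Jacobi identity). -/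
/-- The double-extension bracket on `ℝ × g × ℝ` is bilinear, alternating, and
satisfies the Jacobi identity, hence defines a Lie algebra structure. -/
theorem double_extension_is_lie_algebra {g : Type*} [LieRing g] [LieAlgebra ℝ g]
    (B : g →ₗ[ℝ] g →ₗ[ℝ] ℝ)
    (hsymm : ∀ x y : g, B x y = B y x)
    (hinv : ∀ x y z : g, B ⁅x, y⁆ z = B x ⁅y, z⁆)
    (D : g →ₗ[ℝ] g)
    (hder : ∀ x y : g, D ⁅x, y⁆ = ⁅D x, y⁆ + ⁅x, D y⁆)
    (hskew : ∀ x y : g, B (D x) y = -B x (D y))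
    (br : (ℝ × g × ℝ) → (ℝ × g × ℝ) → (ℝ × g × ℝ))
    (hbr : ∀ a b : ℝ × g × ℝ, br a b =
      (B (D a.2.1) b.2.1, ⁅a.2.1, b.2.1⁆ + a.2.2 • D b.2.1 - b.2.2 • D a.2.1, (0 : ℝ))) :
    (∀ (r : ℝ) (a a' b : ℝ × g × ℝ), br (r • a + a') b = r • br a b + br a' b) ∧
    (∀ (r : ℝ) (a b b' : ℝ × g × ℝ), br a (r • b + b') = r • br a b + br a b') ∧
    (∀ a : ℝ × g × ℝ, br a a = 0) ∧
    (∀ a b c : ℝ × g × ℝ, br (br a b) c + br (br b c) a + br (br c a) b = 0) := by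
  refine ⟨?_, ?_, ?_, ?_⟩
  · rintro r ⟨z1, x1, t1⟩ ⟨z1', x1', t1'⟩ ⟨z2, x2, t2⟩
    simp only [hbr, Prod.smul_mk, Prod.mk_add_mk]
    refine Prod.ext ?_ (Prod.ext ?_ ?_)
    · simp only [map_add, map_smul, LinearMap.add_apply, LinearMap.smul_apply, smul_eq_mul]
    · simp only [map_add, map_smul, add_lie, lie_add, smul_lie, lie_smul, smul_eq_mul]
      module
    · simp
  · rintro r ⟨z1, x1, t1⟩ ⟨z2, x2, t2⟩ ⟨z2', x2', t2'⟩
    simp only [hbr, Prod.smul_mk, Prod.mk_add_mk]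
    refine Prod.ext ?_ (Prod.ext ?_ ?_)
    · simp only [map_add, map_smul, LinearMap.add_apply, LinearMap.smul_apply, smul_eq_mul]
    · simp only [map_add, map_smul, add_lie, lie_add, smul_lie, lie_smul, smul_eq_mul]
      module
    · simp
  · rintro ⟨z, x, t⟩
    have h0 : B (D x) x = 0 := by
      have h1 := hskew x x
      have h2 := hsymm x (D x)
      linarith
    simp [hbr, h0, Prod.ext_iff]
  · rintro ⟨z1, x1, t1⟩ ⟨z2, x2, t2⟩ ⟨z3, x3, t3⟩
    simp only [hbr]
    refine Prod.ext ?_ (Prod.ext ?_ ?_) <;>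
      simp only [Prod.fst_add, Prod.snd_add, map_add, map_sub, map_smul, hder,
        LinearMap.add_apply, LinearMap.sub_apply, LinearMap.smul_apply, smul_eq_mul,
        zero_smul, smul_zero, add_zero, zero_add, sub_zero, Prod.fst_zero, Prod.snd_zero]
    · have q1 : B (D (D x2)) x3 = B (D (D x3)) x2 := by
        rw [hskew (D x2) x3, hskew (D x3) x2, hsymm]
      have q2 : B (D (D x1)) x3 = B (D (D x3)) x1 := by
        rw [hskew (D x1) x3, hskew (D x3) x1, hsymm]
      have q3 : B (D (D x1)) x2 = B (D (D x2)) x1 := by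
        rw [hskew (D x1) x2, hskew (D x2) x1, hsymm]
      have hA : B ⁅x1, D x2⁆ x3 = B ⁅D x2, x3⁆ x1 := by
        rw [hinv, hsymm]
      have hB : B ⁅x2, D x3⁆ x1 = B ⁅D x3, x1⁆ x2 := by
        rw [hinv, hsymm]
      have hC : B ⁅x3, D x1⁆ x2 = B ⁅D x1, x2⁆ x3 := by
        rw [hinv, hsymm]
      have hS : B ⁅D x1, x2⁆ x3 + B ⁅x1, D x2⁆ x3 + B ⁅x2, D x3⁆ x1 = 0 := by
        have h := hskew ⁅x1, x2⁆ x3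
        rw [hder, hinv, hsymm x1 ⁅x2, D x3⁆] at h
        simp only [map_add, LinearMap.add_apply] at h
        linarith
      linear_combination t1 * q1 - t2 * q2 + t3 * q3 + 2 * hS - hA - hB + hC
    · have J : ⁅(⁅x1, x2⁆ : g), x3⁆ + ⁅(⁅x2, x3⁆ : g), x1⁆ + ⁅(⁅x3, x1⁆ : g), x2⁆ = 0 := by
        have h := lie_jacobi x1 x2 x3
        have a1 : (⁅(⁅x1, x2⁆ : g), x3⁆ : g) = -⁅x3, ⁅x1, x2⁆⁆ := (lie_skew _ _).symm
        have a2 : (⁅(⁅x2, x3⁆ : g), x1⁆ : g) = -⁅x1, ⁅x2, x3⁆⁆ := (lie_skew _ _).symm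
        have a3 : (⁅(⁅x3, x1⁆ : g), x2⁆ : g) = -⁅x2, ⁅x3, x1⁆⁆ := (lie_skew _ _).symm
        linear_combination (norm := module) a1 + a2 + a3 - h
      have sk1 : ⁅D x1, x3⁆ = -⁅x3, D x1⁆ := (lie_skew _ _).symm
      have sk2 : ⁅x1, D x2⁆ = -⁅D x2, x1⁆ := (lie_skew _ _).symm
      have sk3 : ⁅x2, D x3⁆ = -⁅D x3, x2⁆ := (lie_skew _ _).symm
      simp only [add_lie, sub_lie, smul_lie, smul_add, smul_sub, smul_smul]
      linear_combination (norm := module) J + (-t2 : ℝ) • sk1 + (-t3 : ℝ) • sk2 + (-t1 : ℝ) • sk3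
end

section
/- Let t be a real inner product space, ν ∈ t*, and for α ∈ t* with α♯ ≠ 0 define r_{(α,0)}(z,h,t) = (z,h,t) - (α(h)+t·ν(α♯))·(-ν(α∨), α∨, 0) on ℝ × t × ℝ. Then for any α₁,…,α_n, r_{(α_n,0)}⋯r_{(α_1,0)}(z,h,t) - (z,h,t) = (ν(F), -F, 0), where F = f_ν^{α₁,…,α_n}(z,h,t) = Σ_{s=1}^n (α_s(h)+t·ν(α_s♯)) · r_{α_n}⋯r_{α_{s+1}}(α_s∨) and r_β(x) = x - β(x)β∨. -/
/-!
Writing the image of `p` under the first `k` reflections as `p + (ν D, -D, 0)`, the next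
reflection `r_{(α,0)}` evaluates `α` at `h - D`, so the defect is updated affinely:
`D ↦ r_α D + (α(h) + t ν(α♯)) α∨`. Unrolling this affine recursion gives the sum `F`.
-/

theorem foldl_Ico_affine_eq_sum {𝕜 M : Type*} [Semiring 𝕜] [AddCommMonoid M] [Module 𝕜 M]
    (r : ℕ → M →ₗ[𝕜] M) (c : ℕ → 𝕜) (v : ℕ → M) {m n : ℕ} (hmn : m ≤ n) :
    (List.Ico m n).foldl (fun x s => r s x + c s • v s) 0
      = ∑ s ∈ Finset.Ico m n, c s • (List.Ico (s + 1) n).foldl (fun y j => r j y) (v s) := by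
  induction n, hmn using Nat.le_induction with
  | base => simp
  | succ n hmn ih =>
    have hfold : ∀ s ∈ Finset.Ico m n,
        (List.Ico (s + 1) (n + 1)).foldl (fun y j => r j y) (v s)
          = r n ((List.Ico (s + 1) n).foldl (fun y j => r j y) (v s)) := fun s hs => by
      rw [List.Ico.succ_top (by simp only [Finset.mem_Ico] at hs; omega), List.foldl_append,
        List.foldl_cons, List.foldl_nil]
    rw [List.Ico.succ_top hmn, List.foldl_append, List.foldl_cons, List.foldl_nil, ih,
      Finset.sum_Ico_succ_top hmn,
      Finset.sum_congr rfl fun s hs => congrArg (c s • ·) (hfold s hs), map_sum]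
    simp

section ExtendedSpace

variable {𝕜 E : Type*} [CommRing 𝕜] [AddCommGroup E] [Module 𝕜 E] (ν : E →ₗ[𝕜] 𝕜)

theorem affineReflection_add_shift (α : E →ₗ[𝕜] 𝕜) (b : 𝕜) (w : E) (p : 𝕜 × E × 𝕜) (D : E) :
    let q : 𝕜 × E × 𝕜 := p + (ν D, -D, 0)
    q - (α q.2.1 + q.2.2 * b) • ((-(ν w), w, 0) : 𝕜 × E × 𝕜)
      = p + (ν (Module.preReflection w α D + (α p.2.1 + p.2.2 * b) • w),
          -(Module.preReflection w α D + (α p.2.1 + p.2.2 * b) • w), 0) := by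
  obtain ⟨z, h, t⟩ := p
  simp only [Module.preReflection_apply, Prod.mk_add_mk, Prod.smul_mk, Prod.mk_sub_mk,
    Prod.mk.injEq, map_add, map_sub, map_neg, map_smul, smul_eq_mul]
  refine ⟨by ring, by module, by ring⟩

theorem foldl_affineReflections_add_shift (αs : ℕ → E →ₗ[𝕜] 𝕜) (bs : ℕ → 𝕜) (w : ℕ → E)
    (R : ℕ → 𝕜 × E × 𝕜 → 𝕜 × E × 𝕜)
    (hR : ∀ s p, R s p = p - (αs s p.2.1 + p.2.2 * bs s) • ((-(ν (w s)), w s, 0) : 𝕜 × E × 𝕜))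
    (l : List ℕ) (p : 𝕜 × E × 𝕜) (D : E) :
    let D' := l.foldl
      (fun D s => Module.preReflection (w s) (αs s) D + (αs s p.2.1 + p.2.2 * bs s) • w s) D
    l.foldl (fun q s => R s q) (p + (ν D, -D, 0)) = p + (ν D', -D', 0) := by
  induction l generalizing D with
  | nil => rfl
  | cons s l ih =>
    intro D'
    rw [List.foldl_cons, hR, affineReflection_add_shift]
    exact ih _

end ExtendedSpace

theorem word_action_formula_general {E : Type*} [NormedAddCommGroup E] [InnerProductSpace ℝ E]
    (n : ℕ) (αs : ℕ → (E →ₗ[ℝ] ℝ)) (sharps : ℕ → E)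
    (ν : E →ₗ[ℝ] ℝ)
    (cor : ℕ → E)
    (refl : ℕ → E → E) (hrefl : ∀ s (x : E), refl s x = x - αs s x • cor s)
    (R : ℕ → ℝ × E × ℝ → ℝ × E × ℝ)
    (hR : ∀ s (p : ℝ × E × ℝ), R s p =
      p - (αs s p.2.1 + p.2.2 * ν (sharps s)) • ((-(ν (cor s)), cor s, 0) : ℝ × E × ℝ))
    (F : ℝ × E × ℝ → E)
    (hF : ∀ p : ℝ × E × ℝ, F p =
      ∑ s ∈ Finset.Icc 1 n, (αs s p.2.1 + p.2.2 * ν (sharps s)) •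
        ((List.Ico (s + 1) (n + 1)).foldl (fun y j => refl j y) (cor s))) :
    ∀ p : ℝ × E × ℝ,
      (List.Ico 1 (n + 1)).foldl (fun q s => R s q) p - p
        = ((ν (F p), -F p, 0) : ℝ × E × ℝ) := by
  intro p
  have hrefl_eq : refl = fun j => ⇑(Module.preReflection (cor j) (αs j)) := by
    ext j x
    rw [hrefl, Module.preReflection_apply]
  have hword := foldl_affineReflections_add_shift ν αs (fun s => ν (sharps s)) cor R hR
    (List.Ico 1 (n + 1)) p 0
  simp only [map_zero, neg_zero, Prod.mk_zero_zero, add_zero] at hword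
  rw [hword, foldl_Ico_affine_eq_sum _ _ _ (by omega), hF, ← Finset.Ico_add_one_right_eq_Icc,
    hrefl_eq, add_sub_cancel_left]

/-- The action of a word `r_{(α_n,0)}⋯r_{(α_1,0)}` of affine reflections on `ℝ × E × ℝ`
differs from the identity by `(ν(F), -F, 0)` with
`F = f_ν^{α₁,…,α_n}(z,h,t) = Σ_s (α_s(h) + t·ν(α_s♯)) · r_{α_n}⋯r_{α_{s+1}}(α_s∨)`. -/
theorem word_action_formula {E : Type*} [NormedAddCommGroup E] [InnerProductSpace ℝ E]
    (n : ℕ) (αs : ℕ → (E →ₗ[ℝ] ℝ)) (sharps : ℕ → E)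
    (hsharp : ∀ s ∈ Finset.Icc 1 n, ∀ h : E, (inner ℝ h (sharps s) : ℝ) = αs s h)
    (hne : ∀ s ∈ Finset.Icc 1 n, sharps s ≠ 0)
    (ν : E →ₗ[ℝ] ℝ)
    (cor : ℕ → E) (hcor : ∀ s, cor s = (2 / (inner ℝ (sharps s) (sharps s) : ℝ)) • sharps s)
    (refl : ℕ → E → E) (hrefl : ∀ s (x : E), refl s x = x - αs s x • cor s)
    (R : ℕ → ℝ × E × ℝ → ℝ × E × ℝ)
    (hR : ∀ s (p : ℝ × E × ℝ), R s p =
      p - (αs s p.2.1 + p.2.2 * ν (sharps s)) • ((-(ν (cor s)), cor s, 0) : ℝ × E × ℝ))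
    (F : ℝ × E × ℝ → E)
    (hF : ∀ p : ℝ × E × ℝ, F p =
      ∑ s ∈ Finset.Icc 1 n, (αs s p.2.1 + p.2.2 * ν (sharps s)) •
        ((List.Ico (s + 1) (n + 1)).foldl (fun y j => refl j y) (cor s))) :
    ∀ p : ℝ × E × ℝ,
      (List.Ico 1 (n + 1)).foldl (fun q s => R s q) p - p
        = ((ν (F p), -F p, 0) : ℝ × E × ℝ) :=
  word_action_formula_general n αs sharps ν cor refl hrefl R hR F hF
end
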